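/- arXiv:1703.01809 — 2 statements merged into one kernel-verified Lean document; each statement's English description precedes it below -/
import Mathlib

section
/- Let s > 0. Let P₀, P₁, P₂, P₃ be points in the Euclidean plane with |P₀P₁| = |P₁P₂| = |P₂P₃| = s, and let θ₂ be the angle ∠P₀P₁P₂ and θ₃ the angle ∠P₁P₂P₃ (measured as interior angles of the polygonal path). If 2π/3 ≤ θ₂ + θ₃ < π and θ₂, θ₃ > 0, then |P₀P₃| < s. -/
/-!
Let `u, v, w` be the edge vectors of the path and `α = π - θ₂`, `β = π - θ₃` its turning
angles. Since the path turns the same way at `P₁` and `P₂`, the angle from `u` to `w` is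
`α + β`, so `|P₀P₃|² = ‖u + v + w‖² = s² (3 + 2 (cos α + cos β + cos (α + β)))`. Finally
`1 + cos α + cos β + cos (α + β) = 4 cos (α/2) cos (β/2) cos ((α + β)/2)` is negative,
because `α, β < π < α + β`.
-/

open EuclideanGeometry Real

/-- The planar cross product of two vectors, used to express that a polygonal path
turns consistently (convexity of the path). -/
noncomputable def planeCross (a b : EuclideanSpace ℝ (Fin 2)) : ℝ :=
  a 0 * b 1 - a 1 * b 0

open InnerProductGeometry RealInnerProductSpace

namespace EuclideanSpace

lemma real_inner_eq_fin_two (u v : EuclideanSpace ℝ (Fin 2)) :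
    ⟪u, v⟫ = u 0 * v 0 + u 1 * v 1 := by
  simp [PiLp.inner_apply, Fin.sum_univ_two, mul_comm]

lemma norm_sq_eq_fin_two (u : EuclideanSpace ℝ (Fin 2)) : ‖u‖ ^ 2 = u 0 ^ 2 + u 1 ^ 2 := by
  simp [EuclideanSpace.real_norm_sq_eq, Fin.sum_univ_two]

end EuclideanSpace

open EuclideanSpace

section PlaneCross

variable (u v w : EuclideanSpace ℝ (Fin 2))

lemma planeCross_sq_add_inner_sq : planeCross u v ^ 2 + ⟪u, v⟫ ^ 2 = ‖u‖ ^ 2 * ‖v‖ ^ 2 := by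
  rw [planeCross, real_inner_eq_fin_two, norm_sq_eq_fin_two, norm_sq_eq_fin_two]; ring

lemma inner_mul_norm_sq_eq_inner_mul_inner_sub_planeCross_mul_planeCross :
    ⟪u, w⟫ * ‖v‖ ^ 2 = ⟪u, v⟫ * ⟪v, w⟫ - planeCross u v * planeCross v w := by
  simp only [planeCross, real_inner_eq_fin_two, norm_sq_eq_fin_two]; ring

lemma abs_planeCross : |planeCross u v| = ‖u‖ * ‖v‖ * sin (InnerProductGeometry.angle u v) := by
  have hsin : 0 ≤ ‖u‖ * ‖v‖ * sin (InnerProductGeometry.angle u v) :=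
    mul_nonneg (by positivity) (sin_nonneg_of_nonneg_of_le_pi (angle_nonneg u v) (angle_le_pi u v))
  rw [← sq_eq_sq₀ (abs_nonneg _) hsin, sq_abs]
  have h := planeCross_sq_add_inner_sq u v
  rw [← cos_angle_mul_norm_mul_norm] at h
  linear_combination h - (‖u‖ * ‖v‖) ^ 2 * sin_sq_add_cos_sq (InnerProductGeometry.angle u v)

/-- When `u → v` and `v → w` turn in the same direction, the angle from `u` to `w` is the sum
of the two turning angles (taken modulo `2π`, as seen by the cosine). -/
lemma inner_eq_mul_cos_angle_add_angle (hturn : 0 < planeCross u v * planeCross v w) :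
    ⟪u, w⟫ = ‖u‖ * ‖w‖ *
      cos (InnerProductGeometry.angle u v + InnerProductGeometry.angle v w) := by
  have hv : v ≠ 0 := by rintro rfl; simp [planeCross] at hturn
  have hcross : planeCross u v * planeCross v w =
      ‖u‖ * ‖v‖ * sin (InnerProductGeometry.angle u v) *
        (‖v‖ * ‖w‖ * sin (InnerProductGeometry.angle v w)) := by
    rw [← abs_planeCross, ← abs_planeCross, ← abs_mul, abs_of_pos hturn]
  have h := inner_mul_norm_sq_eq_inner_mul_inner_sub_planeCross_mul_planeCross u v w
  rw [hcross, ← cos_angle_mul_norm_mul_norm u v, ← cos_angle_mul_norm_mul_norm v w] at h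
  apply mul_right_cancel₀ (pow_ne_zero 2 (norm_ne_zero_iff.mpr hv))
  rw [h, cos_add]; ring

end PlaneCross

lemma norm_add_add_sq_eq_of_planeCross_mul_pos {u v w : EuclideanSpace ℝ (Fin 2)} {s : ℝ}
    (hu : ‖u‖ = s) (hv : ‖v‖ = s) (hw : ‖w‖ = s)
    (hturn : 0 < planeCross u v * planeCross v w) :
    ‖u + v + w‖ ^ 2 = s ^ 2 * (3 + 2 * (cos (InnerProductGeometry.angle u v) +
      cos (InnerProductGeometry.angle v w) +
      cos (InnerProductGeometry.angle u v + InnerProductGeometry.angle v w))) := by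
  have huv := cos_angle_mul_norm_mul_norm u v
  have hvw := cos_angle_mul_norm_mul_norm v w
  have huw := inner_eq_mul_cos_angle_add_angle u v w hturn
  rw [norm_add_sq_real, norm_add_sq_real, inner_add_left]
  rw [hu, hv, hw] at *
  linear_combination 2 * huw - 2 * huv - 2 * hvw

lemma one_add_cos_add_cos_add_cos_add_neg {α β : ℝ} (hα : α < π) (hβ : β < π)
    (hαβ : π < α + β) : 1 + cos α + cos β + cos (α + β) < 0 := by
  have hprod : 1 + cos α + cos β + cos (α + β) =
      4 * cos (α / 2) * cos (β / 2) * cos ((α + β) / 2) := by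
    have hsum : cos (α + β) = 2 * cos ((α + β) / 2) ^ 2 - 1 := by
      rw [← cos_two_mul]; ring_nf
    have hhalf : cos ((α + β) / 2) + cos ((α - β) / 2) = 2 * cos (α / 2) * cos (β / 2) := by
      rw [cos_add_cos]; ring_nf
    linear_combination hsum + cos_add_cos α β + 2 * cos ((α + β) / 2) * hhalf
  have hα2 : 0 < cos (α / 2) := cos_pos_of_mem_Ioo ⟨by linarith, by linarith⟩
  have hβ2 : 0 < cos (β / 2) := cos_pos_of_mem_Ioo ⟨by linarith, by linarith⟩
  have hαβ2 : cos ((α + β) / 2) < 0 := cos_neg_of_pi_div_two_lt_of_lt (by linarith) (by linarith)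
  rw [hprod]
  exact mul_neg_of_pos_of_neg (by positivity) hαβ2

lemma angle_sub_sub_eq_pi_sub_angle {V : Type*} [NormedAddCommGroup V] [InnerProductSpace ℝ V]
    (p₀ p₁ p₂ : V) : InnerProductGeometry.angle (p₁ - p₀) (p₂ - p₁) = π - ∠ p₀ p₁ p₂ := by
  rw [EuclideanGeometry.angle, ← neg_sub, angle_neg_left, vsub_eq_sub, vsub_eq_sub]

theorem stmt_4_general (s : ℝ) (hs : 0 < s) (P₀ P₁ P₂ P₃ : EuclideanSpace ℝ (Fin 2))
    (h01 : dist P₀ P₁ = s) (h12 : dist P₁ P₂ = s) (h23 : dist P₂ P₃ = s)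
    (θ₂ θ₃ : ℝ) (hθ₂ : θ₂ = ∠ P₀ P₁ P₂) (hθ₃ : θ₃ = ∠ P₁ P₂ P₃)
    (hpos₂ : 0 < θ₂) (hpos₃ : 0 < θ₃)
    (hhigh : θ₂ + θ₃ < π)
    (hconvex : 0 < planeCross (P₁ - P₀) (P₂ - P₁) * planeCross (P₂ - P₁) (P₃ - P₂)) :
    dist P₀ P₃ < s := by
  have hnorm {p q : EuclideanSpace ℝ (Fin 2)} (h : dist p q = s) : ‖q - p‖ = s := by
    rwa [← dist_eq_norm, dist_comm]
  have hpath : P₃ - P₀ = (P₁ - P₀) + (P₂ - P₁) + (P₃ - P₂) := by abel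
  have hsq := norm_add_add_sq_eq_of_planeCross_mul_pos (hnorm h01) (hnorm h12) (hnorm h23) hconvex
  rw [angle_sub_sub_eq_pi_sub_angle, angle_sub_sub_eq_pi_sub_angle, ← hθ₂, ← hθ₃, ← hpath,
    ← dist_eq_norm, dist_comm] at hsq
  have htrig := one_add_cos_add_cos_add_cos_add_neg (α := π - θ₂) (β := π - θ₃)
    (by linarith) (by linarith) (by linarith)
  refine lt_of_pow_lt_pow_left₀ 2 hs.le ?_
  rw [hsq]
  nlinarith [pow_pos hs 2]

/-- Let `P₀ P₁ P₂ P₃` be a convex polygonal path in the Euclidean plane consisting of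
three segments of the same length `s`, with interior angles `θ₂ = ∠P₀P₁P₂` and
`θ₃ = ∠P₁P₂P₃`.  If `2π/3 ≤ θ₂ + θ₃ < π` and `θ₂, θ₃ > 0`, then `dist P₀ P₃ < s`. -/
theorem stmt_4 (s : ℝ) (hs : 0 < s) (P₀ P₁ P₂ P₃ : EuclideanSpace ℝ (Fin 2))
    (h01 : dist P₀ P₁ = s) (h12 : dist P₁ P₂ = s) (h23 : dist P₂ P₃ = s)
    (θ₂ θ₃ : ℝ) (hθ₂ : θ₂ = ∠ P₀ P₁ P₂) (hθ₃ : θ₃ = ∠ P₁ P₂ P₃)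
    (hpos₂ : 0 < θ₂) (hpos₃ : 0 < θ₃)
    (hlow : 2 * π / 3 ≤ θ₂ + θ₃) (hhigh : θ₂ + θ₃ < π)
    (hconvex : 0 < planeCross (P₁ - P₀) (P₂ - P₁) * planeCross (P₂ - P₁) (P₃ - P₂)) :
    dist P₀ P₃ < s :=
  stmt_4_general s hs P₀ P₁ P₂ P₃ h01 h12 h23 θ₂ θ₃ hθ₂ hθ₃ hpos₂ hpos₃ hhigh hconvex
end

section
/- Let T be an equilateral triangle in the plane with side length s. Then for every point x in the interior of T, the distance from x to the set of midpoints of the three sides of T is strictly less than s/2. -/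
/-!
By Thales, `x` lies strictly inside the circle with diameter `AB` iff `⟪x - A, x - B⟫ < 0`.
If `x = a A + b B + c C` with `a + b + c = 1` and `ABC` is equilateral of side `s`, this inner
product equals `s² (c (c - 1/2) - a b)`, which is negative once `a, b > 0` and `0 ≤ c ≤ 1/2`.
An interior point has positive barycentric coordinates, and at most one of them exceeds `1/2`.
-/

open Set Finset
open scoped RealInnerProductSpace

section InnerProductSpace

variable {V : Type*} [NormedAddCommGroup V] [InnerProductSpace ℝ V]

theorem dist_midpoint_sq_eq_half_dist_sq_add_inner (x A B : V) :
    dist x (midpoint ℝ A B) ^ 2 = (dist A B / 2) ^ 2 + ⟪x - A, x - B⟫ := by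
  have hm : x - midpoint ℝ A B = (1 / 2 : ℝ) • ((x - A) + (x - B)) := by
    rw [midpoint_eq_smul_add, invOf_eq_inv]; module
  have hAB : A - B = (x - B) - (x - A) := by abel
  rw [dist_eq_norm, dist_eq_norm, hm, hAB, norm_smul, div_pow, mul_pow,
    norm_add_sq_real (x - A) (x - B), norm_sub_sq_real (x - B) (x - A), real_inner_comm (x - B)]
  norm_num
  ring

theorem dist_midpoint_lt_half_dist_iff_inner_neg {x A B : V} :
    dist x (midpoint ℝ A B) < dist A B / 2 ↔ ⟪x - A, x - B⟫ < 0 := by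
  rw [← pow_lt_pow_iff_left₀ dist_nonneg (by positivity) two_ne_zero,
    dist_midpoint_sq_eq_half_dist_sq_add_inner]
  constructor <;> intro h <;> linarith

theorem inner_sub_sub_of_equilateral {A B C : V} {s : ℝ}
    (hAB : dist A B = s) (hBC : dist B C = s) (hCA : dist C A = s)
    {a b c : ℝ} (habc : a + b + c = 1) :
    ⟪a • A + b • B + c • C - A, a • A + b • B + c • C - B⟫ =
      s ^ 2 * (c * (c - 1 / 2) - a * b) := by
  set u := A - C
  set v := B - C
  have hc : c = 1 - a - b := by linarith
  have hxA : a • A + b • B + c • C - A = (a - 1) • u + b • v := by rw [hc]; module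
  have hxB : a • A + b • B + c • C - B = a • u + (b - 1) • v := by rw [hc]; module
  have huu : ⟪u, u⟫ = s ^ 2 := by
    rw [real_inner_self_eq_norm_sq, ← dist_eq_norm, dist_comm, hCA]
  have hvv : ⟪v, v⟫ = s ^ 2 := by
    rw [real_inner_self_eq_norm_sq, ← dist_eq_norm, hBC]
  have huv : ⟪u, v⟫ = s ^ 2 / 2 := by
    have h := norm_sub_sq_real u v
    rw [sub_sub_sub_cancel_right, ← dist_eq_norm, hAB, ← real_inner_self_eq_norm_sq, huu,
      ← real_inner_self_eq_norm_sq, hvv] at h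
    linarith
  rw [hxA, hxB]
  simp only [inner_add_left, inner_add_right, real_inner_smul_left, real_inner_smul_right,
    real_inner_comm u v, huu, hvv, huv]
  rw [hc]
  ring

theorem not_collinear_of_equilateral {A B C : V} {s : ℝ} (hs : 0 < s)
    (hAB : dist A B = s) (hBC : dist B C = s) (hCA : dist C A = s) :
    ¬ Collinear ℝ {A, B, C} := by
  intro h
  rcases h.wbtw_or_wbtw_or_wbtw with hw | hw | hw
  · have := hw.dist_add_dist
    rw [hAB, hBC, dist_comm, hCA] at this; linarith
  · have := hw.dist_add_dist
    rw [hBC, hCA, dist_comm, hAB] at this; linarith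
  · have := hw.dist_add_dist
    rw [hCA, hAB, dist_comm, hBC] at this; linarith

theorem dist_midpoint_lt_half_of_equilateral {A B C : V} {s : ℝ} (hs : 0 < s)
    (hAB : dist A B = s) (hBC : dist B C = s) (hCA : dist C A = s)
    {a b c : ℝ} (ha : 0 < a) (hb : 0 < b) (hc₀ : 0 ≤ c) (hc : c ≤ 1 / 2)
    (habc : a + b + c = 1) :
    dist (a • A + b • B + c • C) (midpoint ℝ A B) < s / 2 := by
  rw [← hAB, dist_midpoint_lt_half_dist_iff_inner_neg,
    inner_sub_sub_of_equilateral hAB hBC hCA habc]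
  exact mul_neg_of_pos_of_neg (by positivity) (by nlinarith [mul_pos ha hb])

end InnerProductSpace

theorem AffineIndependent.exists_pos_weights_of_mem_interior_convexHull {V ι : Type*}
    [NormedAddCommGroup V] [NormedSpace ℝ V] [FiniteDimensional ℝ V] [Fintype ι]
    {p : ι → V} (hp : AffineIndependent ℝ p) {x : V}
    (hx : x ∈ interior (convexHull ℝ (range p))) :
    ∃ w : ι → ℝ, (∀ i, 0 < w i) ∧ ∑ i, w i = 1 ∧ x = ∑ i, w i • p i := by
  have hspan : affineSpan ℝ (range p) = ⊤ :=
    interior_convexHull_nonempty_iff_affineSpan_eq_top.mp ⟨x, hx⟩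
  let b : AffineBasis ι ℝ V := ⟨p, hp, hspan⟩
  have hsum := b.sum_coord_apply_eq_one x
  refine ⟨fun i ↦ b.coord i x, ?_, hsum, ?_⟩
  · rw [show range p = range b from rfl, b.interior_convexHull] at hx
    exact hx
  · have h := b.affineCombination_coord_eq_self x
    rwa [univ.affineCombination_eq_linear_combination _ _ hsum, eq_comm] at h

/-- Let `T` be a (closed) equilateral triangle of side length `s` in the Euclidean
plane.  Every point in the interior of `T` is at distance strictly less than `s/2`
from one of the midpoints of the three sides of `T`. -/
theorem stmt_5 (s : ℝ) (hs : 0 < s) (A B C : EuclideanSpace ℝ (Fin 2))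
    (hAB : dist A B = s) (hBC : dist B C = s) (hCA : dist C A = s)
    (x : EuclideanSpace ℝ (Fin 2))
    (hx : x ∈ interior (convexHull ℝ ({A, B, C} : Set (EuclideanSpace ℝ (Fin 2))))) :
    dist x (midpoint ℝ A B) < s / 2 ∨ dist x (midpoint ℝ B C) < s / 2 ∨
      dist x (midpoint ℝ C A) < s / 2 := by
  have hind : AffineIndependent ℝ ![A, B, C] := affineIndependent_iff_not_collinear_set.mpr
    (not_collinear_of_equilateral hs hAB hBC hCA)
  rw [← singleton_union, ← Matrix.range_cons_cons_empty B C ![], ← Matrix.range_cons] at hx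
  obtain ⟨w, hw, hsum, rfl⟩ := hind.exists_pos_weights_of_mem_interior_convexHull hx
  simp only [Fin.sum_univ_three, Matrix.cons_val_zero, Matrix.cons_val_one,
    Matrix.cons_val_two] at hsum ⊢
  rcases le_or_gt (w 2) (1 / 2) with h₂ | h₂
  · exact Or.inl (dist_midpoint_lt_half_of_equilateral hs hAB hBC hCA (hw 0) (hw 1)
      (hw 2).le h₂ hsum)
  · refine Or.inr (Or.inl ?_)
    rw [add_rotate]
    exact dist_midpoint_lt_half_of_equilateral hs hBC hCA hAB (hw 1) (hw 2) (hw 0).le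
      (by linarith [hw 1]) (by linarith)
end
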